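/- Let x, y ∈ X be distinct, let Π_{x,y} be the set of permutations of X fixing x and y (so |Π_{x,y}| = (n−2)!), let c be a tournament on X and ℓ ∈ {0,1} with (c x y if and only if ℓ = 1). Put s0 = |{z ∈ X ∖ {x,y} : c x z}|/(n−2) and s1 = |{z ∈ X ∖ {x,y} : c y z}|/(n−2). Then t⟨x,y,ℓ,s0,s1⟩ = (1/(n−2)!) · Σ_{π ∈ Π_{x,y}} t[π·c]. -/

import Mathlib

open scoped BigOperators

variable {X : Type*}

/-- A tournament on `X`: irreflexive and, on distinct points, exactly one direction holds. -/
def IsTournament (R : X → X → Prop) : Prop :=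
  (∀ x, ¬ R x x) ∧ ∀ x y : X, x ≠ y → (R x y ↔ ¬ R y x)

/-- Out-degree of `x` in the relation `R`. -/
noncomputable def valT (R : X → X → Prop) (x : X) : ℕ :=
  Set.ncard {y | R x y}

/-- A tournament is balanced if every out-degree equals `(n-1)/2`. -/
def IsBalanced [Fintype X] (R : X → X → Prop) : Prop :=
  ∀ x : X, (valT R x : ℝ) = ((Fintype.card X : ℝ) - 1) / 2

/-- Action of a permutation on a relation. -/
def permAct (π : Equiv.Perm X) (R : X → X → Prop) : X → X → Prop :=
  fun x y => R (π.symm x) (π.symm y)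

/-- A set of relations closed under the permutation action. -/
def SymmetricSet (D : Set (X → X → Prop)) : Prop :=
  ∀ (π : Equiv.Perm X), ∀ R ∈ D, permAct π R ∈ D

/-- The majority closure of a set of tournaments. -/
def majCl [Fintype X] (D : Set (X → X → Prop)) : Set (X → X → Prop) :=
  {d | IsTournament d ∧ ∃ w : (X → X → Prop) → ℝ,
    (∀ c, 0 ≤ w c ∧ w c ≤ 1) ∧
    (∀ c, w c ≠ 0 → c ∈ D) ∧
    (Function.support w).Finite ∧
    (∑ᶠ c, w c) = 1 ∧
    ∀ x y : X, x ≠ y →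
      (d x y ↔ 1 / 2 < ∑ᶠ c ∈ {c : X → X → Prop | c ∈ D ∧ c x y}, w c)}

open Classical in
noncomputable def tOf (d : X → X → Prop) : X → X → ℝ :=
  fun x y => if d x y then 1 else 0

/-- pr-cl: the convex hull of `{t[d] : d ∈ D}`. -/
noncomputable def prCl (D : Set (X → X → Prop)) : Set (X → X → ℝ) :=
  convexHull ℝ (tOf '' D)

/-- `t` is a weighted tournament. -/
def IsWeighted (t : X → X → ℝ) : Prop :=
  ∀ x y : X, x ≠ y → 0 ≤ t x y ∧ t x y ≤ 1 ∧ t y x = 1 - t x y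

/-- A weighted tournament is balanced if each row sums to `(n-1)/2`. -/
def BalancedW [Fintype X] (t : X → X → ℝ) : Prop :=
  ∀ x : X, (∑ᶠ y ∈ {y : X | y ≠ x}, t x y) = ((Fintype.card X : ℝ) - 1) / 2

/-- A tournament is pseudo-balanced if it is dominated by a balanced weighted tournament. -/
def PseudoBalanced [Fintype X] (c : X → X → Prop) : Prop :=
  ∃ t : X → X → ℝ, IsWeighted t ∧ BalancedW t ∧
    ∀ x y : X, x ≠ y → c x y → 1 / 2 < t x y

open Classical in
noncomputable def tConfig (x y : X) (a s0 s1 : ℝ) : X → X → ℝ :=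
  fun u v =>
    if u = v then 0
    else if u = x ∧ v = y then a
    else if u = y ∧ v = x then 1 - a
    else if u = x then s0
    else if v = x then 1 - s0
    else if u = y then s1
    else if v = y then 1 - s1
    else 1 / 2

/-- `Prd_ℓ(𝒟)`. -/
noncomputable def PrdL [Fintype X] (l : ℕ) (D : Set (X → X → Prop)) : Set (ℝ × ℝ) :=
  {p | ∃ c ∈ D, ∃ x y : X, x ≠ y ∧ (c x y ↔ l = 1) ∧
    p.1 = (Set.ncard {z : X | z ≠ x ∧ z ≠ y ∧ c x z} : ℝ) / ((Fintype.card X : ℝ) - 2) ∧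
    p.2 = (Set.ncard {z : X | z ≠ x ∧ z ≠ y ∧ c y z} : ℝ) / ((Fintype.card X : ℝ) - 2)}

/-- `Pr_A(𝒟)`. -/
noncomputable def PrA [Fintype X] (A : Set ℝ) (D : Set (X → X → Prop)) : Set (ℝ × ℝ) :=
  {p | 0 ≤ p.1 ∧ p.1 ≤ 1 ∧ 0 ≤ p.2 ∧ p.2 ≤ 1 ∧
    ∃ x y : X, x ≠ y ∧ ∃ a ∈ A, tConfig x y a p.1 p.2 ∈ prCl D}

/-- `V_ℓ(d)` as a subset of `ℝ²`. -/
noncomputable def Vset [Fintype X] (l : ℕ) (d : X → X → Prop) : Set (ℝ × ℝ) :=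
  {p | ∃ x y : X, x ≠ y ∧ (if l = 1 then d x y else d y x) ∧
    p = ((valT d x : ℝ), (valT d y : ℝ))}

/-- `V*_ℓ(d)`. -/
noncomputable def VstarSet [Fintype X] (l : ℕ) (d : X → X → Prop) : Set (ℝ × ℝ) :=
  {p | ∃ q ∈ Vset l d, p = (q.1 - (l : ℝ), q.2 - (1 - (l : ℝ)))}

open Classical in
noncomputable def tCycle (k : ℕ) (xs : ℕ → X) (a : ℝ) : X → X → ℝ :=
  fun u v =>
    if u = v then 0
    else if ∃ i < k, u = xs i ∧ v = xs ((i + 1) % k) then a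
    else if ∃ i < k, v = xs i ∧ u = xs ((i + 1) % k) then 1 - a
    else 1 / 2

open Classical in
noncomputable def tTriple (x y z : X) : X → X → ℝ :=
  fun u v =>
    if u = v then 0
    else if (u, v) = (x, y) ∨ (u, v) = (y, z) ∨ (u, v) = (z, x) then 1
    else if (u, v) = (y, x) ∨ (u, v) = (z, y) ∨ (u, v) = (x, z) then 0
    else 1 / 2

/-- The dual (reverse) tournament. -/
def dualT (c : X → X → Prop) : X → X → Prop := fun x y => c y x

/-- The symmetric closure (orbit) of a single tournament. -/
def symCl (c : X → X → Prop) : Set (X → X → Prop) :=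
  {d | ∃ π : Equiv.Perm X, d = permAct π c}

/-! Average `t[π·c]` over the group `S` of permutations fixing `x` and `y`. The entry at `(x, y)`
is the same for every `π ∈ S`. For `v ∉ {x, y}`, left multiplication by a transposition of
`X ∖ {x, y}` shows that `π⁻¹ v` is equidistributed over `X ∖ {x, y}` as `π` ranges over `S`, so
the average at `(x, v)` is the proportion `s0` of out-neighbours of `x` there. For
`u, v ∉ {x, y}`, left multiplication by the transposition `(u v)` exchanges the entries at
`(u, v)` and `(v, u)`, which sum to `1` in a tournament, so each averages to `1/2`. -/

open Finset

theorem IsTournament.permAct {c : X → X → Prop} (hc : IsTournament c) (π : Equiv.Perm X) :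
    IsTournament (permAct π c) :=
  ⟨fun _ => hc.1 _, fun _ _ huv => hc.2 _ _ (π.symm.injective.ne huv)⟩

theorem tOf_permAct (π : Equiv.Perm X) (c : X → X → Prop) (u v : X) :
    tOf (permAct π c) u v = tOf c (π.symm u) (π.symm v) :=
  rfl

theorem IsTournament.tOf_swap {c : X → X → Prop} (hc : IsTournament c) {u v : X} (huv : u ≠ v) :
    tOf c v u = 1 - tOf c u v := by
  have := hc.2 u v huv
  by_cases h : c u v <;> simp_all [tOf]

theorem tConfig_eq_of {x y : X} (hxy : x ≠ y) {a s0 s1 : ℝ} {t : X → X → ℝ}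
    (hskew : ∀ u v, u ≠ v → t v u = 1 - t u v) (hxy_eq : t x y = a)
    (hx : ∀ v, v ≠ x → v ≠ y → t x v = s0) (hy : ∀ v, v ≠ x → v ≠ y → t y v = s1)
    (hrest : ∀ u v, u ≠ v → u ≠ x → u ≠ y → v ≠ x → v ≠ y → t u v = 1 / 2) :
    ∀ u v, u ≠ v → tConfig x y a s0 s1 u v = t u v := by
  intro u v huv
  rcases eq_or_ne u x with rfl | hux
  · rcases eq_or_ne v y with rfl | hvy
    · simp [tConfig, huv, hxy_eq]
    · simp [tConfig, huv, huv.symm, hvy, hx v huv.symm hvy]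
  rcases eq_or_ne u y with rfl | huy
  · rcases eq_or_ne v x with rfl | hvx
    · simp [tConfig, huv, hskew _ _ huv.symm, hxy_eq]
    · simp [tConfig, huv, hux, hvx, hy v hvx huv.symm]
  rcases eq_or_ne v x with rfl | hvx
  · simp [tConfig, hux, huy, hskew _ _ hux.symm, hx u hux huy]
  rcases eq_or_ne v y with rfl | hvy
  · simp [tConfig, hux, huy, hvx, hskew _ _ huy.symm, hy u hux huy]
  simp [tConfig, huv, hux, huy, hvx, hvy, hrest u v huv hux huy hvx hvy]

section PairStabilizer

variable [Fintype X] [DecidableEq X] {x y : X}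

def pairStab (x y : X) : Finset (Equiv.Perm X) :=
  univ.filter fun π => π x = x ∧ π y = y

theorem mem_pairStab {π : Equiv.Perm X} : π ∈ pairStab x y ↔ π x = x ∧ π y = y := by
  simp [pairStab]

theorem card_pairStab (hxy : x ≠ y) : #(pairStab x y) = (Fintype.card X - 2).factorial := by
  let Y : Finset X := {x, y}ᶜ
  have e : {π : Equiv.Perm X // π x = x ∧ π y = y} ≃ {π : Equiv.Perm X // ∀ a, a ∉ Y → π a = a} :=
    Equiv.subtypeEquivRight fun π => by
      simp only [Y, mem_compl, not_not, mem_insert, mem_singleton, or_imp, forall_and, forall_eq]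
  rw [pairStab, ← Fintype.card_subtype, Fintype.card_congr e,
    ← Fintype.card_congr (Equiv.Perm.subtypeEquivSubtypePerm (· ∈ Y)), Fintype.card_perm,
    Fintype.card_coe, card_compl, card_pair hxy]

theorem one_mem_pairStab : 1 ∈ pairStab x y := mem_pairStab.2 ⟨rfl, rfl⟩

theorem mul_mem_pairStab {σ π : Equiv.Perm X} (hσ : σ ∈ pairStab x y) (hπ : π ∈ pairStab x y) :
    σ * π ∈ pairStab x y := by
  rw [mem_pairStab] at hσ hπ ⊢
  simp [hσ, hπ]

theorem inv_mem_pairStab {σ : Equiv.Perm X} (hσ : σ ∈ pairStab x y) : σ⁻¹ ∈ pairStab x y := by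
  rw [mem_pairStab] at hσ ⊢
  rw [Equiv.Perm.inv_eq_iff_eq, Equiv.Perm.inv_eq_iff_eq]
  exact ⟨hσ.1.symm, hσ.2.symm⟩

theorem symm_apply_of_mem_pairStab {π : Equiv.Perm X} (hπ : π ∈ pairStab x y) :
    π.symm x = x ∧ π.symm y = y :=
  mem_pairStab.1 (inv_mem_pairStab hπ)

theorem swap_mem_pairStab {u v : X} (hu : u ∈ ({x, y} : Finset X)ᶜ)
    (hv : v ∈ ({x, y} : Finset X)ᶜ) : Equiv.swap u v ∈ pairStab x y := by
  simp only [mem_compl, mem_insert, mem_singleton, not_or] at hu hv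
  exact mem_pairStab.2 ⟨Equiv.swap_apply_of_ne_of_ne (Ne.symm hu.1) (Ne.symm hv.1),
    Equiv.swap_apply_of_ne_of_ne (Ne.symm hu.2) (Ne.symm hv.2)⟩

theorem sum_pairStab_mul_left {M : Type*} [AddCommMonoid M] {σ : Equiv.Perm X}
    (hσ : σ ∈ pairStab x y) (f : Equiv.Perm X → M) :
    ∑ π ∈ pairStab x y, f (σ * π) = ∑ π ∈ pairStab x y, f π :=
  sum_nbij' (σ * ·) (σ⁻¹ * ·) (fun _ hπ => mul_mem_pairStab hσ hπ)
    (fun _ hπ => mul_mem_pairStab (inv_mem_pairStab hσ) hπ) (by simp) (by simp) (fun _ _ => rfl)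

theorem sum_compl_pair_symm_apply {M : Type*} [AddCommMonoid M] {π : Equiv.Perm X}
    (hπ : π ∈ pairStab x y) (g : X → M) :
    ∑ w ∈ ({x, y} : Finset X)ᶜ, g (π.symm w) = ∑ w ∈ ({x, y} : Finset X)ᶜ, g w := by
  obtain ⟨hx, hy⟩ := mem_pairStab.1 hπ
  refine sum_equiv π.symm (fun w => ?_) (fun _ _ => rfl)
  simp only [mem_compl, mem_insert, mem_singleton, Equiv.symm_apply_eq, hx, hy]

theorem sum_pairStab_symm_apply_eq {M : Type*} [AddCommMonoid M] {v w : X}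
    (hv : v ∈ ({x, y} : Finset X)ᶜ) (hw : w ∈ ({x, y} : Finset X)ᶜ) (g : X → M) :
    ∑ π ∈ pairStab x y, g (π.symm v) = ∑ π ∈ pairStab x y, g (π.symm w) := by
  rw [← sum_pairStab_mul_left (swap_mem_pairStab hv hw)]
  simp [Equiv.Perm.mul_def]

theorem card_nsmul_sum_pairStab_symm_apply {M : Type*} [AddCommMonoid M] {v : X}
    (hv : v ∈ ({x, y} : Finset X)ᶜ) (g : X → M) :
    #({x, y} : Finset X)ᶜ • ∑ π ∈ pairStab x y, g (π.symm v)
      = #(pairStab x y) • ∑ w ∈ ({x, y} : Finset X)ᶜ, g w :=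
  calc #({x, y} : Finset X)ᶜ • ∑ π ∈ pairStab x y, g (π.symm v)
      _ = ∑ w ∈ ({x, y} : Finset X)ᶜ, ∑ π ∈ pairStab x y, g (π.symm w) := by
        rw [← sum_const]
        exact sum_congr rfl fun w hw => sum_pairStab_symm_apply_eq hv hw g
      _ = ∑ π ∈ pairStab x y, ∑ w ∈ ({x, y} : Finset X)ᶜ, g (π.symm w) := sum_comm
      _ = ∑ π ∈ pairStab x y, ∑ w ∈ ({x, y} : Finset X)ᶜ, g w :=
        sum_congr rfl fun π hπ => sum_compl_pair_symm_apply hπ g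
      _ = _ := sum_const _

noncomputable def pairAvg (x y : X) (c : X → X → Prop) (u v : X) : ℝ :=
  1 / (#(pairStab x y) : ℝ) * ∑ π ∈ pairStab x y, tOf (permAct π c) u v

variable {c : X → X → Prop}

theorem card_pairStab_ne_zero : (#(pairStab x y) : ℝ) ≠ 0 :=
  Nat.cast_ne_zero.2 (card_ne_zero_of_mem one_mem_pairStab)

theorem pairAvg_swap (hc : IsTournament c) {u v : X} (huv : u ≠ v) :
    pairAvg x y c v u = 1 - pairAvg x y c u v := by
  have := card_pairStab_ne_zero (x := x) (y := y)
  rw [pairAvg, pairAvg, sum_congr rfl fun π _ => (hc.permAct π).tOf_swap huv, sum_sub_distrib,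
    sum_const, nsmul_one, mul_sub, one_div_mul_cancel this]

theorem pairAvg_left_right : pairAvg x y c x y = tOf c x y := by
  have := card_pairStab_ne_zero (x := x) (y := y)
  have hfix : ∀ π ∈ pairStab x y, tOf (permAct π c) x y = tOf c x y := fun π hπ => by
    rw [tOf_permAct, (symm_apply_of_mem_pairStab hπ).1, (symm_apply_of_mem_pairStab hπ).2]
  rw [pairAvg, sum_congr rfl hfix, sum_const, nsmul_eq_mul]
  field_simp

open Classical in
theorem pairAvg_of_mem_pair {p v : X} (hp : p ∈ ({x, y} : Finset X))
    (hv : v ∈ ({x, y} : Finset X)ᶜ) :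
    pairAvg x y c p v = #{z ∈ ({x, y} : Finset X)ᶜ | c p z} / #({x, y} : Finset X)ᶜ := by
  have hS := card_pairStab_ne_zero (x := x) (y := y)
  have hY : (#({x, y} : Finset X)ᶜ : ℝ) ≠ 0 := Nat.cast_ne_zero.2 (card_ne_zero_of_mem hv)
  have hfix : ∀ π ∈ pairStab x y, tOf (permAct π c) p v = tOf c p (π.symm v) := fun π hπ => by
    obtain ⟨hx, hy⟩ := symm_apply_of_mem_pairStab hπ
    simp only [mem_insert, mem_singleton] at hp
    rcases hp with rfl | rfl <;> simp only [tOf_permAct, hx, hy]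
  have hcount : ∑ w ∈ ({x, y} : Finset X)ᶜ, tOf c p w = #{z ∈ ({x, y} : Finset X)ᶜ | c p z} := by
    simp only [tOf, sum_boole]
  have key := card_nsmul_sum_pairStab_symm_apply hv (tOf c p)
  rw [nsmul_eq_mul, nsmul_eq_mul, hcount] at key
  rw [pairAvg, sum_congr rfl hfix, eq_div_iff hY]
  field_simp
  linarith

theorem pairAvg_of_mem_compl (hc : IsTournament c) {u v : X} (huv : u ≠ v)
    (hu : u ∈ ({x, y} : Finset X)ᶜ) (hv : v ∈ ({x, y} : Finset X)ᶜ) :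
    pairAvg x y c u v = 1 / 2 := by
  have hsymm : pairAvg x y c v u = pairAvg x y c u v := by
    rw [pairAvg, pairAvg, ← sum_pairStab_mul_left (swap_mem_pairStab hu hv)]
    simp [tOf_permAct, Equiv.Perm.mul_def]
  linarith [pairAvg_swap (x := x) (y := y) hc huv]

end PairStabilizer

theorem stmt7_general [Fintype X] [DecidableEq X]
    (x y : X) (hxy : x ≠ y)
    (c : X → X → Prop) (hc : IsTournament c)
    (l : ℕ) (hl : l = 0 ∨ l = 1) (hcxy : c x y ↔ l = 1)
    (s0 s1 : ℝ)
    (hs0 : s0 = (Set.ncard {z : X | z ≠ x ∧ z ≠ y ∧ c x z} : ℝ) / ((Fintype.card X : ℝ) - 2))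
    (hs1 : s1 = (Set.ncard {z : X | z ≠ x ∧ z ≠ y ∧ c y z} : ℝ) / ((Fintype.card X : ℝ) - 2)) :
    ∀ u v : X, u ≠ v →
      tConfig x y (l : ℝ) s0 s1 u v =
        (1 / ((Nat.factorial (Fintype.card X - 2)) : ℝ)) *
          ∑ π ∈ Finset.univ.filter (fun π : Equiv.Perm X => π x = x ∧ π y = y),
            tOf (permAct π c) u v := by
  classical
  have hcount : ∀ p, (Set.ncard {z : X | z ≠ x ∧ z ≠ y ∧ c p z} : ℝ) / ((Fintype.card X : ℝ) - 2)
      = #{z ∈ ({x, y} : Finset X)ᶜ | c p z} / #({x, y} : Finset X)ᶜ := fun p => by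
    have h2 : 2 ≤ Fintype.card X := card_pair hxy ▸ card_le_univ {x, y}
    rw [card_compl, card_pair hxy, Nat.cast_sub h2, ← Set.ncard_coe_finset]
    congr 3
    ext z
    simp [and_assoc]
  have hl' : tOf c x y = l := by rcases hl with rfl | rfl <;> simp_all [tOf]
  have hmem : ∀ {v}, v ≠ x → v ≠ y → v ∈ ({x, y} : Finset X)ᶜ := fun hvx hvy => by simp [hvx, hvy]
  rw [← card_pairStab hxy]
  exact tConfig_eq_of (t := pairAvg x y c) hxy (fun _ _ => pairAvg_swap hc)
    (pairAvg_left_right.trans hl')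
    (fun v hvx hvy => by rw [pairAvg_of_mem_pair (by simp) (hmem hvx hvy), hs0, hcount])
    (fun v hvx hvy => by rw [pairAvg_of_mem_pair (by simp) (hmem hvx hvy), hs1, hcount])
    (fun u v huv hux huy hvx hvy => pairAvg_of_mem_compl hc huv (hmem hux huy) (hmem hvx hvy))

theorem stmt7 [Fintype X] [DecidableEq X] (hcard : 3 ≤ Fintype.card X)
    (x y : X) (hxy : x ≠ y)
    (c : X → X → Prop) (hc : IsTournament c)
    (l : ℕ) (hl : l = 0 ∨ l = 1) (hcxy : c x y ↔ l = 1)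
    (s0 s1 : ℝ)
    (hs0 : s0 = (Set.ncard {z : X | z ≠ x ∧ z ≠ y ∧ c x z} : ℝ) / ((Fintype.card X : ℝ) - 2))
    (hs1 : s1 = (Set.ncard {z : X | z ≠ x ∧ z ≠ y ∧ c y z} : ℝ) / ((Fintype.card X : ℝ) - 2)) :
    ∀ u v : X, u ≠ v →
      tConfig x y (l : ℝ) s0 s1 u v =
        (1 / ((Nat.factorial (Fintype.card X - 2)) : ℝ)) *
          ∑ π ∈ Finset.univ.filter (fun π : Equiv.Perm X => π x = x ∧ π y = y),
            tOf (permAct π c) u v :=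
  stmt7_general x y hxy c hc l hl hcxy s0 s1 hs0 hs1
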